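/- For every infinite word w over Σ there exist ∼-classes C and D such that w ∈ CD^ω, CD = C, and DD = D. -/

import Mathlib

variable {Q : Type*} {A : Type*}

/-- Reachability in a nondeterministic automaton: `q` is reachable from `p` reading `w`. -/
def Reach (δ : Q → A → Set Q) : Q → List A → Q → Prop
  | p, [], q => p = q
  | p, a :: w, q => ∃ r ∈ δ p a, Reach δ r w q

/-- Reachability visiting some final state along the way (possibly the endpoints). -/
def ReachF (δ : Q → A → Set Q) (Fs : Set Q) (p : Q) (w : List A) (q : Q) : Prop :=
  ∃ u v r, w = u ++ v ∧ r ∈ Fs ∧ Reach δ p u r ∧ Reach δ r v q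

/-- The relation ∼ : `w ∼ u` iff for all states `p q`, reachability and
reachability-through-final-states via `w` and via `u` coincide. -/
def Sim (δ : Q → A → Set Q) (Fs : Set Q) (w u : List A) : Prop :=
  ∀ p q : Q, (Reach δ p w q ↔ Reach δ p u q) ∧ (ReachF δ Fs p w q ↔ ReachF δ Fs p u q)

/-- The class of a word in 𝒬 = Σ⁺/∼ ⊎ {[ε]} : for a nonempty word its ∼-class,
and `[ε] = {ε}` for the empty word. -/
def wordClass (δ : Q → A → Set Q) (Fs : Set Q) (w : List A) : Set (List A) :=
  {u | (w = [] ∧ u = []) ∨ (w ≠ [] ∧ u ≠ [] ∧ Sim δ Fs w u)}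

/-- `C` is an element of 𝒬. -/
def IsClass (δ : Q → A → Set Q) (Fs : Set Q) (C : Set (List A)) : Prop :=
  ∃ w : List A, C = wordClass δ Fs w

/-- Elementwise concatenation of languages of finite words. -/
def mulSet (L M : Set (List A)) : Set (List A) := Set.image2 (· ++ ·) L M

/-- Monoid multiplication of classes: the class of the concatenation of representatives. -/
def classMul (δ : Q → A → Set Q) (Fs : Set Q) (C D : Set (List A)) : Set (List A) :=
  {v | ∃ w ∈ C, ∃ u ∈ D, v ∈ wordClass δ Fs (w ++ u)}

/-- Finite star of a language. -/
def starSet (L : Set (List A)) : Set (List A) :=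
  {w | ∃ l : List (List A), (∀ u ∈ l, u ∈ L) ∧ w = l.flatten}

/-- Possibly infinite words over `A` : Σ^{≤ω}, as stable `Option`-valued streams. -/
def Word (A : Type*) : Type _ := {g : ℕ → Option A // ∀ n, g n = none → g (n + 1) = none}

/-- A finite word as an element of Σ^{≤ω}. -/
def ofList (w : List A) : Word A :=
  ⟨fun n => w[n]?, fun n h => by
    rw [List.getElem?_eq_none_iff] at *
    omega⟩

/-- An infinite word as an element of Σ^{≤ω}. -/
def ofStream (s : ℕ → A) : Word A := ⟨fun n => some (s n), fun n h => by simp at h⟩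

/- The (possibly infinite) concatenation `f 0 · f 1 · f 2 ⋯` of a sequence of finite
words, as an element of Σ^{≤ω}. -/
open Classical in
noncomputable def prodWord (f : ℕ → List A) : Word A :=
  ⟨fun n =>
    if h : ∃ k, n < ((List.range k).flatMap f).length then
      ((List.range h.choose).flatMap f)[n]?
    else none, by
    intro n hn
    dsimp only at hn ⊢
    by_cases h : ∃ k, n < ((List.range k).flatMap f).length
    · exfalso
      rw [dif_pos h, List.getElem?_eq_none_iff] at hn
      have := h.choose_spec
      omega
    · have h2 : ¬ ∃ k, n + 1 < ((List.range k).flatMap f).length := by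
        push_neg at h ⊢
        intro k
        have := h k
        omega
      rw [dif_neg h2]⟩

/-- Concatenation of a finite word with a possibly infinite word. -/
def catWord (u : List A) (w : Word A) : Word A :=
  ⟨fun n => if n < u.length then u[n]? else w.1 (n - u.length), by
    intro n hn
    dsimp only at hn ⊢
    by_cases h : n < u.length
    · exfalso
      rw [if_pos h, List.getElem?_eq_none_iff] at hn
      omega
    · rw [if_neg h] at hn
      have h2 : ¬ n + 1 < u.length := by omega
      rw [if_neg h2]
      have h3 : n + 1 - u.length = (n - u.length) + 1 := by omega
      rw [h3]
      exact w.2 _ hn⟩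

/-- `CD^ω` : all words `w₀w₁w₂⋯` with `w₀ ∈ C` and `wᵢ ∈ D` for `i ≥ 1`. -/
def omegaProd (C D : Set (List A)) : Set (Word A) :=
  {w | ∃ f : ℕ → List A, f 0 ∈ C ∧ (∀ i, 1 ≤ i → f i ∈ D) ∧ w = prodWord f}

/-- `L^ω` : all words `w₁w₂w₃⋯` with all `wᵢ ∈ L`. -/
def omegaPow (L : Set (List A)) : Set (Word A) :=
  {w | ∃ f : ℕ → List A, (∀ i, f i ∈ L) ∧ w = prodWord f}

/-- Acceptance of a finite word (as an NFA). -/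
def NFAAccepts (δ : Q → A → Set Q) (q0 : Q) (Fs : Set Q) (w : List A) : Prop :=
  ∃ q ∈ Fs, Reach δ q0 w q

/-- Büchi acceptance of an infinite word: a run from `q0` visiting `Fs` infinitely often. -/
def BuchiAccepts (δ : Q → A → Set Q) (q0 : Q) (Fs : Set Q) (s : ℕ → A) : Prop :=
  ∃ r : ℕ → Q, r 0 = q0 ∧ (∀ n, r (n + 1) ∈ δ (r n) (s n)) ∧ {n | r n ∈ Fs}.Infinite

/-- The language `L(𝔄) ⊆ Σ^{≤ω}` of the extended Büchi automaton: finite words accepted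
as an NFA together with infinite words accepted as a Büchi automaton. -/
def LangOf (δ : Q → A → Set Q) (q0 : Q) (Fs : Set Q) : Set (Word A) :=
  {w | (∃ l : List A, w = ofList l ∧ NFAAccepts δ q0 Fs l) ∨
       (∃ s : ℕ → A, w = ofStream s ∧ BuchiAccepts δ q0 Fs s)}

/-- The set 𝒬 of classes, as a type. -/
def QClass (δ : Q → A → Set Q) (Fs : Set Q) : Type _ := {C : Set (List A) // IsClass δ Fs C}

/-- The set 𝓒 of pairs `(C, D)` of classes with `CD = C` and `DD = D`, as a type. -/
def CPair (δ : Q → A → Set Q) (Fs : Set Q) : Type _ :=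
  {p : Set (List A) × Set (List A) //
    IsClass δ Fs p.1 ∧ IsClass δ Fs p.2 ∧
    classMul δ Fs p.1 p.2 = p.1 ∧ classMul δ Fs p.2 p.2 = p.2}

/-- The language `CD^ω` denoted by an element of 𝓒. -/
def concPair {δ : Q → A → Set Q} {Fs : Set Q} (p : CPair δ Fs) : Set (Word A) :=
  omegaProd p.1.1 p.1.2

/-- A subset 𝒱 ⊆ 𝓒 is closed: whenever `UV^ω ∩ CD^ω ≠ ∅` for `(C,D) ∈ 𝒱` and
`(U,V) ∈ 𝓒`, then `(U,V) ∈ 𝒱`. -/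
def IsClosedC {δ : Q → A → Set Q} {Fs : Set Q} (𝒱 : Set (CPair δ Fs)) : Prop :=
  ∀ p ∈ 𝒱, ∀ q : CPair δ Fs, (concPair q ∩ concPair p).Nonempty → q ∈ 𝒱

/-- Pre-abstraction 𝔣. -/
def frakF (δ : Q → A → Set Q) (Fs : Set Q) (V : Set (Word A)) : Set (CPair δ Fs) :=
  {p | (concPair p ∩ V).Nonempty}

/-- Pre-concretization 𝔤. -/
def frakG {δ : Q → A → Set Q} {Fs : Set Q} (𝒱 : Set (CPair δ Fs)) : Set (Word A) :=
  ⋃ p ∈ 𝒱, concPair p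

/-- Closure 𝔠(𝒱) = ⋃_{n ≥ 1} (𝔣 ∘ 𝔤)ⁿ(𝒱). -/
def frakC {δ : Q → A → Set Q} {Fs : Set Q} (𝒱 : Set (CPair δ Fs)) : Set (CPair δ Fs) :=
  ⋃ n : ℕ, (fun 𝒲 => frakF δ Fs (frakG 𝒲))^[n + 1] 𝒱

/-- Abstraction α_* -/
def alphaStar (δ : Q → A → Set Q) (Fs : Set Q) (U : Set (List A)) : Set (QClass δ Fs) :=
  {C | (C.1 ∩ U).Nonempty}

/-- Concretization γ_* -/
def gammaStar {δ : Q → A → Set Q} {Fs : Set Q} (𝒰 : Set (QClass δ Fs)) : Set (List A) :=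
  ⋃ C ∈ 𝒰, C.1

/-- Abstraction α_{≤ω}. -/
def alphaOmega (δ : Q → A → Set Q) (Fs : Set Q) (V : Set (Word A)) : Set (CPair δ Fs) :=
  frakC (frakF δ Fs V)

/-- Concretization γ_{≤ω}. -/
def gammaOmega {δ : Q → A → Set Q} {Fs : Set Q} (𝒱 : Set (CPair δ Fs)) : Set (Word A) :=
  frakG 𝒱

/-!
Colour each pair `i < j` of positions of `s` by the transition profiles of the prefix `s[0, i)`
and of the infix `s[i, j)`; there are finitely many colours since `∼` only depends on the
profile. Ramsey's theorem gives positions `φ 0 < φ 1 < ⋯` on which the colour is constant, and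
then `C = [s[0, φ 1)]`, `D = [s[φ 1, φ 2)]` work: every `s[φ i, φ (i + 1))` lies in `D`, while
`CD = [s[0, φ 2)] = C` and `DD = [s[φ 1, φ 3)] = D`.
-/

open Filter

theorem Filter.exists_strictMono_rel_of_eventually_eventually {l : Filter ℕ} [l.NeBot]
    {R : ℕ → ℕ → Prop} (h : ∀ᶠ x in l, ∀ᶠ y in l, x < y ∧ R x y) :
    ∃ φ : ℕ → ℕ, StrictMono φ ∧ ∀ i j, i < j → R (φ i) (φ j) := by
  let next (S : Set ℕ) : Set ℕ := S ∩ {y | sInf S < y ∧ R (sInf S) y}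
  set S : ℕ → Set ℕ := fun n => next^[n] {x | ∀ᶠ y in l, x < y ∧ R x y}
  have hS_succ (n : ℕ) : S (n + 1) = next (S n) := Function.iterate_succ_apply' ..
  have hS_anti : Antitone S := antitone_nat_of_succ_le fun n => by
    rw [hS_succ]; exact Set.inter_subset_left
  have hS_mem (n : ℕ) : S n ∈ l := by
    induction n with
    | zero => exact h
    | succ n ih =>
      rw [hS_succ]
      exact inter_mem ih (hS_anti (Nat.zero_le n) (Nat.sInf_mem (l.nonempty_of_mem ih)))
  have hrel {i j : ℕ} (hij : i < j) :
      sInf (S i) < sInf (S j) ∧ R (sInf (S i)) (sInf (S j)) := by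
    have hj : sInf (S j) ∈ S (i + 1) :=
      hS_anti hij (Nat.sInf_mem (l.nonempty_of_mem (hS_mem j)))
    rw [hS_succ] at hj
    exact hj.2
  exact ⟨fun n => sInf (S n), fun i j hij => (hrel hij).1, fun i j hij => (hrel hij).2⟩

theorem exists_strictMono_monochromatic {K : Type*} [Finite K] (c : ℕ → ℕ → K) :
    ∃ φ : ℕ → ℕ, StrictMono φ ∧ ∃ k, ∀ i j, i < j → c (φ i) (φ j) = k := by
  set U := hyperfilter ℕ
  have hcol (x : ℕ) : ∃ k, ∀ᶠ y in U, c x y = k :=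
    U.eventually_exists_iff.1 (.of_forall fun y => ⟨_, rfl⟩)
  choose col hcol using hcol
  obtain ⟨k, hk⟩ := (U.eventually_exists_iff (P := fun k x => col x = k)).1
    (.of_forall fun x => ⟨col x, rfl⟩)
  have hgt (x : ℕ) : ∀ᶠ y in U, x < y :=
    hyperfilter_le_cofinite (Nat.cofinite_eq_atTop ▸ eventually_gt_atTop x)
  obtain ⟨φ, hφ, hφk⟩ := exists_strictMono_rel_of_eventually_eventually (l := U)
    (R := fun x y => c x y = k)
    (hk.mono fun x hx => (hgt x).and ((hcol x).mono fun y hy => hy.trans hx))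
  exact ⟨φ, hφ, k, hφk⟩

def streamSlice (s : ℕ → A) (a b : ℕ) : List A := (List.range' a (b - a)).map s

theorem streamSlice_ne_nil (s : ℕ → A) {a b : ℕ} (h : a < b) : streamSlice s a b ≠ [] := by
  simp [streamSlice]; omega

theorem streamSlice_append (s : ℕ → A) {a b c : ℕ} (hab : a ≤ b) (hbc : b ≤ c) :
    streamSlice s a b ++ streamSlice s b c = streamSlice s a c := by
  have h := List.range'_append_1 (s := a) (m := b - a) (n := c - b)
  rw [Nat.add_sub_cancel' hab, show b - a + (c - b) = c - a by omega] at h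
  rw [streamSlice, streamSlice, streamSlice, ← List.map_append, h]

theorem flatMap_range_streamSlice (s : ℕ → A) {b : ℕ → ℕ} (hb : Monotone b) (k : ℕ) :
    (List.range k).flatMap (fun i => streamSlice s (b i) (b (i + 1))) =
      streamSlice s (b 0) (b k) := by
  induction k with
  | zero => simp [streamSlice]
  | succ k ih =>
    rw [List.range_succ, List.flatMap_append, ih, List.flatMap_singleton,
      streamSlice_append s (hb (Nat.zero_le k)) (hb k.le_succ)]

theorem prodWord_eq_ofStream {f : ℕ → List A} {s : ℕ → A} {b : ℕ → ℕ}
    (hf : ∀ k, (List.range k).flatMap f = (List.range (b k)).map s) (hb : ∀ n, ∃ k, n < b k) :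
    prodWord f = ofStream s := by
  apply Subtype.ext
  funext n
  have hex : ∃ k, n < ((List.range k).flatMap f).length := by simpa [hf] using hb n
  have hlt : n < b hex.choose := by simpa [hf] using hex.choose_spec
  dsimp only [prodWord, ofStream]
  rw [dif_pos hex, hf, List.getElem?_map, List.getElem?_range hlt, Option.map_some]

theorem prodWord_streamSlice (s : ℕ → A) {b : ℕ → ℕ} (hb : StrictMono b) (hb0 : b 0 = 0) :
    prodWord (fun i => streamSlice s (b i) (b (i + 1))) = ofStream s :=
  prodWord_eq_ofStream (b := b)
    (fun k => by
      rw [flatMap_range_streamSlice s hb.monotone, hb0, streamSlice, List.range_eq_range',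
        Nat.sub_zero])
    (fun n => ⟨n + 1, Nat.lt_of_lt_of_le n.lt_succ_self (hb.id_le _)⟩)

section Automaton

variable {δ : Q → A → Set Q} {Fs : Set Q}

theorem reach_append (u v : List A) (p q : Q) :
    Reach δ p (u ++ v) q ↔ ∃ r, Reach δ p u r ∧ Reach δ r v q := by
  induction u generalizing p with
  | nil => simp [Reach]
  | cons a u ih => simp only [List.cons_append, Reach, ih]; aesop

theorem reachF_append (u v : List A) (p q : Q) :
    ReachF δ Fs p (u ++ v) q ↔
      (∃ r, ReachF δ Fs p u r ∧ Reach δ r v q) ∨ (∃ r, Reach δ p u r ∧ ReachF δ Fs r v q) := by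
  constructor
  · rintro ⟨u', v', f, huv, hf, hpf, hfq⟩
    rcases List.append_eq_append_iff.1 huv with ⟨m, rfl, rfl⟩ | ⟨m, rfl, rfl⟩
    · obtain ⟨r, hpr, hrf⟩ := (reach_append u m p f).1 hpf
      exact .inr ⟨r, hpr, m, v', f, rfl, hf, hrf, hfq⟩
    · obtain ⟨r, hfr, hrq⟩ := (reach_append m v f q).1 hfq
      exact .inl ⟨r, ⟨u', m, f, rfl, hf, hpf, hfr⟩, hrq⟩
  · rintro (⟨r, ⟨u', v', f, rfl, hf, hpf, hfr⟩, hrq⟩ |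
      ⟨r, hpr, ⟨u', v', f, rfl, hf, hrf, hfq⟩⟩)
    · exact ⟨u', v' ++ v, f, List.append_assoc .., hf, hpf,
        (reach_append v' v f q).2 ⟨r, hfr, hrq⟩⟩
    · exact ⟨u ++ u', v', f, (List.append_assoc ..).symm, hf,
        (reach_append u u' p f).2 ⟨r, hpr, hrf⟩, hfq⟩

theorem Sim.refl (w : List A) : Sim δ Fs w w := fun _ _ => ⟨Iff.rfl, Iff.rfl⟩

theorem Sim.symm {w u : List A} (h : Sim δ Fs w u) : Sim δ Fs u w :=
  fun p q => ⟨(h p q).1.symm, (h p q).2.symm⟩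

theorem Sim.trans {w u v : List A} (h₁ : Sim δ Fs w u) (h₂ : Sim δ Fs u v) : Sim δ Fs w v :=
  fun p q => ⟨(h₁ p q).1.trans (h₂ p q).1, (h₁ p q).2.trans (h₂ p q).2⟩

theorem Sim.append {w w' u u' : List A} (hw : Sim δ Fs w w') (hu : Sim δ Fs u u') :
    Sim δ Fs (w ++ u) (w' ++ u') := fun p q =>
  ⟨by simp only [reach_append, (hw _ _).1, (hu _ _).1],
   by simp only [reachF_append, (hw _ _).1, (hw _ _).2, (hu _ _).1, (hu _ _).2]⟩

theorem mem_wordClass_iff {w : List A} (hw : w ≠ []) (v : List A) :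
    v ∈ wordClass δ Fs w ↔ v ≠ [] ∧ Sim δ Fs w v := by
  simp [wordClass, hw]

theorem mem_wordClass_self (w : List A) : w ∈ wordClass δ Fs w := by
  by_cases hw : w = []
  · exact .inl ⟨hw, hw⟩
  · exact .inr ⟨hw, hw, .refl w⟩

theorem wordClass_eq_of_sim {w u : List A} (hw : w ≠ []) (hu : u ≠ []) (h : Sim δ Fs w u) :
    wordClass δ Fs w = wordClass δ Fs u := by
  ext v
  rw [mem_wordClass_iff hw, mem_wordClass_iff hu]
  exact and_congr_right fun _ => ⟨h.symm.trans, h.trans⟩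

theorem classMul_wordClass {w u : List A} (hw : w ≠ []) (hu : u ≠ []) :
    classMul δ Fs (wordClass δ Fs w) (wordClass δ Fs u) = wordClass δ Fs (w ++ u) := by
  ext v
  refine ⟨?_, fun hv => ⟨w, mem_wordClass_self w, u, mem_wordClass_self u, hv⟩⟩
  rintro ⟨w', hw', u', hu', hv⟩
  obtain ⟨hw'ne, hww'⟩ := (mem_wordClass_iff hw w').1 hw'
  obtain ⟨-, huu'⟩ := (mem_wordClass_iff hu u').1 hu'
  rwa [wordClass_eq_of_sim (by simp [hw]) (by simp [hw'ne]) (hww'.append huu')]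

def transProfile (δ : Q → A → Set Q) (Fs : Set Q) (w : List A) :
    (Q → Q → Prop) × (Q → Q → Prop) :=
  (fun p q => Reach δ p w q, fun p q => ReachF δ Fs p w q)

theorem wordClass_eq_of_transProfile_eq {w u : List A} (hw : w ≠ []) (hu : u ≠ [])
    (h : transProfile δ Fs w = transProfile δ Fs u) : wordClass δ Fs w = wordClass δ Fs u :=
  wordClass_eq_of_sim hw hu fun p q =>
    ⟨iff_of_eq (congrFun₂ (congrArg Prod.fst h) p q),
     iff_of_eq (congrFun₂ (congrArg Prod.snd h) p q)⟩

end Automaton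

theorem omegaProd_covers_general {Q A : Type*} [Finite Q]
    (δ : Q → A → Set Q) (Fs : Set Q) (s : ℕ → A) :
    ∃ C D : Set (List A), IsClass δ Fs C ∧ IsClass δ Fs D ∧
      classMul δ Fs C D = C ∧ classMul δ Fs D D = D ∧ ofStream s ∈ omegaProd C D := by
  obtain ⟨φ, hφ, k, hk⟩ := exists_strictMono_monochromatic fun i j =>
    (transProfile δ Fs (streamSlice s 0 i), transProfile δ Fs (streamSlice s i j))
  have hpos {i : ℕ} (hi : 0 < i) : 0 < φ i := (Nat.zero_le _).trans_lt (hφ hi)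
  have hne {a b : ℕ} (hab : a < b) : streamSlice s a b ≠ [] := streamSlice_ne_nil s hab
  have hprefix :
      wordClass δ Fs (streamSlice s 0 (φ 2)) = wordClass δ Fs (streamSlice s 0 (φ 1)) :=
    wordClass_eq_of_transProfile_eq (hne (hpos two_pos)) (hne (hpos one_pos))
      ((congrArg Prod.fst (hk 2 3 (by norm_num))).trans
        (congrArg Prod.fst (hk 1 2 one_lt_two)).symm)
  have hinfix {i j i' j' : ℕ} (hij : i < j) (hij' : i' < j') :
      wordClass δ Fs (streamSlice s (φ i) (φ j)) = wordClass δ Fs (streamSlice s (φ i') (φ j')) :=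
    wordClass_eq_of_transProfile_eq (hne (hφ hij)) (hne (hφ hij'))
      ((congrArg Prod.snd (hk i j hij)).trans (congrArg Prod.snd (hk i' j' hij')).symm)
  set b : ℕ → ℕ := fun n => if n = 0 then 0 else φ n
  have hb : StrictMono b := strictMono_nat_of_lt_succ fun n => by
    rcases n with _ | n
    · simpa [b] using hpos one_pos
    · simpa [b] using hφ n.succ.lt_succ_self
  have h12 : φ 1 < φ 2 := hφ one_lt_two
  have h23 : φ 2 < φ 3 := hφ (by norm_num)
  refine ⟨_, _, ⟨streamSlice s 0 (φ 1), rfl⟩, ⟨streamSlice s (φ 1) (φ 2), rfl⟩, ?_, ?_,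
    ⟨fun n => streamSlice s (b n) (b (n + 1)), mem_wordClass_self _, fun i hi => ?_,
      (prodWord_streamSlice s hb rfl).symm⟩⟩
  · rw [classMul_wordClass (hne (hpos one_pos)) (hne h12),
      streamSlice_append s (Nat.zero_le _) h12.le, hprefix]
  · nth_rw 2 [hinfix (i' := 2) (j' := 3) one_lt_two (by norm_num)]
    rw [classMul_wordClass (hne h12) (hne h23), streamSlice_append s h12.le h23.le,
      hinfix (by norm_num) one_lt_two]
  · simp only [b, Nat.pos_iff_ne_zero.1 hi, Nat.succ_ne_zero, if_false]
    rw [hinfix one_lt_two i.lt_succ_self]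
    exact mem_wordClass_self _

/-- every infinite word lies in some `CD^ω` with `C, D` classes satisfying
`CD = C` and `DD = D`. -/
theorem omegaProd_covers {Q A : Type*} [Finite Q] [Finite A]
    (δ : Q → A → Set Q) (Fs : Set Q) (s : ℕ → A) :
    ∃ C D : Set (List A), IsClass δ Fs C ∧ IsClass δ Fs D ∧
      classMul δ Fs C D = C ∧ classMul δ Fs D D = D ∧ ofStream s ∈ omegaProd C D :=
  omegaProd_covers_general δ Fs s
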